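/- arXiv:1701.05637 — 4 statements merged into one kernel-verified Lean document; each statement's English description precedes it below -/
import Mathlib

section
/- For any guessing function $G$ on a finite set $\mathcal{X}$ with side information $Y$, and any $\rho > 0$, the $\rho$-th moment of the guesswork satisfies $E[G(X|Y)^\rho] \le \sum_y \left( \sum_x P_{X,Y}(x,y)^{1/(1+\rho)} \right)^{1+\rho}$ when $G(\cdot|Y=y)$ orders the values of $X$ in decreasing order of $P_{X|Y}(x|y)$. -/
/-!
Fix `y` and write `p = P(·, y)`, `β = 1/(1+ρ)`, `S = ∑ₓ p(x)^β`. Since the guessing order is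
decreasing in `p`, the `x` guessed at position `r = G(x) + 1` has at least `r` values `x'` with
`p(x')^β ≥ p(x)^β`, so `r · p(x)^β ≤ S`. As `p = (p^β)^(1+ρ)`, this gives
`r^ρ p(x) = (r p(x)^β)^ρ p(x)^β ≤ S^ρ p(x)^β`, and summing over `x` yields `S^ρ · S = S^(1+ρ)`.
-/

open Real Finset

theorem Equiv.card_filter_le_apply {X : Type*} [Fintype X] {n : ℕ} (e : X ≃ Fin n) (x : X) :
    #{x' | e x' ≤ e x} = (e x : ℕ) + 1 := by
  have : ({x' | e x' ≤ e x} : Finset X) = (Iic (e x)).map e.symm.toEmbedding := by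
    ext x'
    simp
  rw [this, card_map, Fin.card_Iic]

theorem rank_mul_le_sum_of_antitone {X : Type*} [Fintype X] {n : ℕ} (e : X ≃ Fin n)
    (w : X → ℝ) (hw0 : ∀ x, 0 ≤ w x) (hdec : ∀ x x', e x ≤ e x' → w x' ≤ w x) (x : X) :
    ((e x : ℕ) + 1 : ℝ) * w x ≤ ∑ x', w x' :=
  calc ((e x : ℕ) + 1 : ℝ) * w x = #{x' | e x' ≤ e x} • w x := by
        rw [e.card_filter_le_apply, nsmul_eq_mul]; push_cast; rfl
    _ ≤ ∑ x' ∈ {x' | e x' ≤ e x}, w x' :=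
        card_nsmul_le_sum _ _ _ fun x' hx' => hdec x' x (mem_filter.1 hx').2
    _ ≤ ∑ x', w x' :=
        sum_le_sum_of_subset_of_nonneg (subset_univ _) fun x' _ _ => hw0 x'

theorem rpow_mul_le_of_mul_rpow_one_div_le {r p S ρ : ℝ} (hr : 0 ≤ r) (hp : 0 ≤ p) (hρ : 0 ≤ ρ)
    (h : r * p ^ (1 / (1 + ρ)) ≤ S) : r ^ ρ * p ≤ S ^ ρ * p ^ (1 / (1 + ρ)) := by
  have hq : 0 ≤ p ^ (1 / (1 + ρ)) := rpow_nonneg hp _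
  have hpq : p = p ^ (1 / (1 + ρ)) * (p ^ (1 / (1 + ρ))) ^ ρ := by
    rw [← rpow_one_add' hq (by positivity), one_div, rpow_inv_rpow hp (by positivity)]
  calc r ^ ρ * p = (r * p ^ (1 / (1 + ρ))) ^ ρ * p ^ (1 / (1 + ρ)) := by
        rw [mul_rpow hr hq]; conv_lhs => rw [hpq]
        ring
    _ ≤ S ^ ρ * p ^ (1 / (1 + ρ)) := by gcongr

theorem guesswork_moment_le {X : Type*} [Fintype X] {n : ℕ} (p : X → ℝ) {ρ : ℝ} (hρ : 0 ≤ ρ)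
    (hp0 : ∀ x, 0 ≤ p x) (e : X ≃ Fin n)
    (hdec : ∀ x x', e x ≤ e x' → p x' ≤ p x) :
    ∑ x, ((e x : ℕ) + 1 : ℝ) ^ ρ * p x ≤ (∑ x, p x ^ (1 / (1 + ρ))) ^ (1 + ρ) := by
  set S := ∑ x, p x ^ (1 / (1 + ρ))
  have hrank (x : X) : ((e x : ℕ) + 1 : ℝ) * p x ^ (1 / (1 + ρ)) ≤ S :=
    rank_mul_le_sum_of_antitone e _ (fun x => rpow_nonneg (hp0 x) _)
      (fun x x' hxx' => rpow_le_rpow (hp0 x') (hdec x x' hxx') (by positivity)) x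
  calc ∑ x, ((e x : ℕ) + 1 : ℝ) ^ ρ * p x
      ≤ ∑ x, S ^ ρ * p x ^ (1 / (1 + ρ)) := sum_le_sum fun x _ =>
        rpow_mul_le_of_mul_rpow_one_div_le (by positivity) (hp0 x) hρ (hrank x)
    _ = S ^ (1 + ρ) := by
        rw [← mul_sum, rpow_one_add' (sum_nonneg fun x _ => rpow_nonneg (hp0 x) _)
          (by positivity), mul_comm]

theorem arikan_upper_bound_general
    {X Y : Type*} [Fintype X] [Fintype Y] (P : X → Y → ℝ) (ρ : ℝ) (hρ : 0 < ρ)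
    (hP0 : ∀ x y, 0 ≤ P x y)
    (G : Y → (X ≃ Fin (Fintype.card X)))
    (hdec : ∀ y, ∀ x x' : X, G y x ≤ G y x' → P x' y ≤ P x y) :
    ∑ y, ∑ x, ((G y x : ℕ) + 1 : ℝ) ^ ρ * P x y ≤
      ∑ y, (∑ x, (P x y) ^ (1 / (1 + ρ))) ^ (1 + ρ) :=
  sum_le_sum fun y _ => guesswork_moment_le (P · y) hρ.le (hP0 · y) (G y) (hdec y)

/-- Arikan's upper bound: for the optimal (probability-decreasing) guessing order
with side information, the ρth guesswork moment is at most
`∑_y (∑_x P(x,y)^{1/(1+ρ)})^{1+ρ}`. -/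
theorem arikan_upper_bound
    {X Y : Type*} [Fintype X] [Fintype Y] (P : X → Y → ℝ) (ρ : ℝ) (hρ : 0 < ρ)
    (hP0 : ∀ x y, 0 ≤ P x y) (hP1 : ∑ y, ∑ x, P x y = 1)
    (G : Y → (X ≃ Fin (Fintype.card X)))
    (hdec : ∀ y, ∀ x x' : X, G y x ≤ G y x' → P x' y ≤ P x y) :
    ∑ y, ∑ x, ((G y x : ℕ) + 1 : ℝ) ^ ρ * P x y ≤
      ∑ y, (∑ x, (P x y) ^ (1 / (1 + ρ))) ^ (1 + ρ) :=
  arikan_upper_bound_general P ρ hρ hP0 G hdec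
end

section
/- For any guessing function $G$ on a finite set $\mathcal{X}$ of size $M$ with side information $Y$ and any $\rho > 0$, the $\rho$-th moment of guesswork satisfies $E[G(X|Y)^\rho] \ge (1+\ln M)^{-\rho} \sum_y \left( \sum_x P_{X,Y}(x,y)^{1/(1+\rho)} \right)^{1+\rho}$. -/
/-!
For each `y`, Hölder's inequality with exponent `1 + ρ` and weights `1 / G(x|y)` bounds
`(∑ₓ P(x,y)^{1/(1+ρ)})^{1+ρ}` by `(∑ₓ 1 / G(x|y))^ρ · ∑ₓ G(x|y)^ρ P(x,y)`. Since `G(·|y)` is a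
bijection onto `{1, …, M}`, the first factor is the harmonic number `H_M ≤ 1 + ln M`.
Summing over `y` gives the bound.
-/

open Real Finset

theorem sum_inv_equiv_fin_succ_le_one_add_log {α : Type*} [Fintype α] {n : ℕ} (e : α ≃ Fin n) :
    ∑ x, ((e x : ℕ) + 1 : ℝ)⁻¹ ≤ 1 + log n := by
  calc ∑ x, ((e x : ℕ) + 1 : ℝ)⁻¹ = ∑ i : Fin n, ((i : ℕ) + 1 : ℝ)⁻¹ :=
        Fintype.sum_equiv e _ _ fun _ ↦ rfl
    _ = harmonic n := by
        rw [Fin.sum_univ_eq_sum_range (fun i ↦ ((i : ℝ) + 1)⁻¹), harmonic]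
        push_cast
        rfl
    _ ≤ 1 + log n := harmonic_le_one_add_log n

theorem rpow_sum_rpow_one_div_one_add_le {ι : Type*} (s : Finset ι) {ρ : ℝ} (hρ : 0 ≤ ρ)
    {g q : ι → ℝ} (hg : ∀ i, 0 < g i) (hq : ∀ i, 0 ≤ q i) :
    (∑ i ∈ s, q i ^ (1 / (1 + ρ))) ^ (1 + ρ) ≤
      (∑ i ∈ s, (g i)⁻¹) ^ ρ * ∑ i ∈ s, g i ^ ρ * q i := by
  have h1ρ : 0 < 1 + ρ := by linarith
  have holder := inner_le_weight_mul_Lp_of_nonneg s (by linarith : 1 ≤ 1 + ρ)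
    (fun i ↦ (g i)⁻¹) (fun i ↦ g i * q i ^ (1 / (1 + ρ)))
    (fun i ↦ (inv_pos.2 (hg i)).le) (fun i ↦ mul_nonneg (hg i).le (rpow_nonneg (hq i) _))
  have hlhs : ∀ i, (g i)⁻¹ * (g i * q i ^ (1 / (1 + ρ))) = q i ^ (1 / (1 + ρ)) := fun i ↦
    inv_mul_cancel_left₀ (hg i).ne' _
  have hrhs : ∀ i, (g i)⁻¹ * (g i * q i ^ (1 / (1 + ρ))) ^ (1 + ρ) = g i ^ ρ * q i := fun i ↦ by
    rw [mul_rpow (hg i).le (rpow_nonneg (hq i) _), ← rpow_mul (hq i),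
      one_div_mul_cancel h1ρ.ne', rpow_one, ← mul_assoc, ← rpow_neg_one,
      ← rpow_add (hg i), neg_add_cancel_left]
  simp only [hlhs, hrhs] at holder
  have hH : 0 ≤ ∑ i ∈ s, (g i)⁻¹ := sum_nonneg fun i _ ↦ (inv_pos.2 (hg i)).le
  have hT : 0 ≤ ∑ i ∈ s, g i ^ ρ * q i :=
    sum_nonneg fun i _ ↦ mul_nonneg (rpow_nonneg (hg i).le _) (hq i)
  calc (∑ i ∈ s, q i ^ (1 / (1 + ρ))) ^ (1 + ρ)
      ≤ ((∑ i ∈ s, (g i)⁻¹) ^ (1 - (1 + ρ)⁻¹) * (∑ i ∈ s, g i ^ ρ * q i) ^ (1 + ρ)⁻¹)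
          ^ (1 + ρ) :=
        rpow_le_rpow (sum_nonneg fun i _ ↦ rpow_nonneg (hq i) _) holder h1ρ.le
    _ = (∑ i ∈ s, (g i)⁻¹) ^ ρ * ∑ i ∈ s, g i ^ ρ * q i := by
        rw [mul_rpow (rpow_nonneg hH _) (rpow_nonneg hT _), ← rpow_mul hH, ← rpow_mul hT,
          inv_mul_cancel₀ h1ρ.ne', rpow_one, sub_mul, one_mul, inv_mul_cancel₀ h1ρ.ne',
          add_sub_cancel_left]

theorem arikan_lower_bound_general
    {X Y : Type*} [Fintype X] [Fintype Y] (P : X → Y → ℝ) (ρ : ℝ) (hρ : 0 < ρ)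
    (hP0 : ∀ x y, 0 ≤ P x y)
    (G : Y → (X ≃ Fin (Fintype.card X))) :
    (1 + Real.log (Fintype.card X)) ^ (-ρ) *
        ∑ y, (∑ x, (P x y) ^ (1 / (1 + ρ))) ^ (1 + ρ) ≤
      ∑ y, ∑ x, ((G y x : ℕ) + 1 : ℝ) ^ ρ * P x y := by
  set C := 1 + log (Fintype.card X)
  have hC : 0 < C := by have := log_natCast_nonneg (Fintype.card X); positivity
  have hguess : ∀ y, 0 ≤ ∑ x, ((G y x : ℕ) + 1 : ℝ) ^ ρ * P x y := fun y ↦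
    sum_nonneg fun x _ ↦ mul_nonneg (by positivity) (hP0 x y)
  have hy : ∀ y, (∑ x, (P x y) ^ (1 / (1 + ρ))) ^ (1 + ρ) ≤
      C ^ ρ * ∑ x, ((G y x : ℕ) + 1 : ℝ) ^ ρ * P x y := fun y ↦
    (rpow_sum_rpow_one_div_one_add_le univ hρ.le (fun x ↦ by positivity) (hP0 · y)).trans <|
      mul_le_mul_of_nonneg_right
        (rpow_le_rpow (sum_nonneg fun x _ ↦ by positivity)
          (sum_inv_equiv_fin_succ_le_one_add_log (G y)) hρ.le) (hguess y)
  rw [rpow_neg hC.le, inv_mul_le_iff₀ (rpow_pos_of_pos hC ρ), mul_sum]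
  exact sum_le_sum fun y _ ↦ hy y

/-- Arikan's lower bound: for any guessing function with side information,
the ρth guesswork moment is at least
`(1+ln M)^{-ρ} ∑_y (∑_x P(x,y)^{1/(1+ρ)})^{1+ρ}`. -/
theorem arikan_lower_bound
    {X Y : Type*} [Fintype X] [Fintype Y] (P : X → Y → ℝ) (ρ : ℝ) (hρ : 0 < ρ)
    (hP0 : ∀ x y, 0 ≤ P x y) (hP1 : ∑ y, ∑ x, P x y = 1)
    (G : Y → (X ≃ Fin (Fintype.card X))) :
    (1 + Real.log (Fintype.card X)) ^ (-ρ) *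
        ∑ y, (∑ x, (P x y) ^ (1 / (1 + ρ))) ^ (1 + ρ) ≤
      ∑ y, ∑ x, ((G y x : ℕ) + 1 : ℝ) ^ ρ * P x y :=
  arikan_lower_bound_general P ρ hρ hP0 G
end

section
/- For $0 < p \le 1/2$ and $\rho > 0$, the function $q \mapsto \rho H(q) - D(q\|p)$ on $[0,1]$ is concave and attains its maximum at $s^* = \frac{p^{1/(1+\rho)}}{p^{1/(1+\rho)} + (1-p)^{1/(1+\rho)}}$, where the maximum value equals $\rho H_{1/(1+\rho)}(p) = (1+\rho)\log_2\left(p^{1/(1+\rho)} + (1-p)^{1/(1+\rho)}\right)$. -/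
/-! With `r = 1/(1+ρ)`, `Z = p^r + (1-p)^r` and the escort probability `s* = p^r / Z`, expanding
the logarithms gives, for every `q`,
`ρ H(q) - D(q‖p) = (1+ρ) (log₂ Z - D(q‖s*))`.
Gibbs' inequality `D(q‖s*) ≥ 0`, with equality at `q = s*`, yields the maximiser and the maximum;
concavity holds because `ρ H(q) - D(q‖p)` is `(1+ρ) H(q)` plus an affine function of `q`. -/

open Real

/-- Binary Shannon entropy (in bits). -/
noncomputable def Hbin (q : ℝ) : ℝ :=
  -(q * Real.logb 2 q) - (1 - q) * Real.logb 2 (1 - q)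

/-- Binary Kullback–Leibler divergence (in bits). -/
noncomputable def klBin (q p : ℝ) : ℝ :=
  q * Real.logb 2 (q / p) + (1 - q) * Real.logb 2 ((1 - q) / (1 - p))

open InformationTheory

lemma Hbin_eq_binEntropy_div_log_two (q : ℝ) : Hbin q = binEntropy q / log 2 := by
  rw [Hbin, binEntropy_eq_negMulLog_add_negMulLog_one_sub, negMulLog, negMulLog, logb, logb]
  ring

lemma concaveOn_Hbin : ConcaveOn ℝ (Set.Icc 0 1) Hbin := by
  have : Hbin = (log 2)⁻¹ • binEntropy := by
    ext q
    rw [Hbin_eq_binEntropy_div_log_two, Pi.smul_apply, smul_eq_mul, div_eq_inv_mul]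
  rw [this]
  exact strictConcave_binEntropy.concaveOn.smul (inv_nonneg.2 (log_nonneg one_le_two))

lemma mul_logb_div (b x : ℝ) {y : ℝ} (hy : y ≠ 0) :
    x * logb b (x / y) = x * logb b x - x * logb b y := by
  rcases eq_or_ne x 0 with rfl | hx
  · simp
  · rw [logb_div hx hy, mul_sub]

lemma klBin_eq_neg_Hbin_sub {p : ℝ} (q : ℝ) (hp0 : p ≠ 0) (hp1 : p ≠ 1) :
    klBin q p = -Hbin q - (q * logb 2 p + (1 - q) * logb 2 (1 - p)) := by
  rw [klBin, Hbin, mul_logb_div _ _ hp0, mul_logb_div _ _ (sub_ne_zero.2 hp1.symm)]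
  ring

lemma klBin_self {s : ℝ} (hs0 : s ≠ 0) (hs1 : s ≠ 1) : klBin s s = 0 := by
  simp [klBin, hs0, sub_ne_zero.2 hs1.symm]

/-- `c * klFun (t / c) = t * log (t / c) + c - t`, and the terms `c - t` of the two summands cancel. -/
lemma klBin_eq_klFun {q s : ℝ} (hs0 : 0 < s) (hs1 : s < 1) :
    klBin q s = (s * klFun (q / s) + (1 - s) * klFun ((1 - q) / (1 - s))) / log 2 := by
  have : 1 - s ≠ 0 := by linarith
  simp only [klBin, klFun, logb]
  field_simp
  ring

lemma klBin_nonneg {q s : ℝ} (hq : q ∈ Set.Icc (0 : ℝ) 1) (hs0 : 0 < s) (hs1 : s < 1) :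
    0 ≤ klBin q s := by
  rw [klBin_eq_klFun hs0 hs1]
  have hq1 : 0 ≤ 1 - q := sub_nonneg.2 hq.2
  have hs1' : 0 < 1 - s := sub_pos.2 hs1
  exact div_nonneg (add_nonneg
    (mul_nonneg hs0.le (klFun_nonneg (div_nonneg hq.1 hs0.le)))
    (mul_nonneg hs1'.le (klFun_nonneg (div_nonneg hq1 hs1'.le))))
    (log_nonneg one_le_two)

lemma concaveOn_mul_Hbin_sub_klBin {p ρ : ℝ} (hp0 : p ≠ 0) (hp1 : p ≠ 1) (hρ : 0 ≤ 1 + ρ) :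
    ConcaveOn ℝ (Set.Icc 0 1) (fun q => ρ * Hbin q - klBin q p) := by
  have hlin := ((LinearMap.id : ℝ →ₗ[ℝ] ℝ).smulRight (logb 2 p - logb 2 (1 - p))).concaveOn
    (convex_Icc 0 1)
  refine ((concaveOn_Hbin.smul hρ).add (hlin.add_const (logb 2 (1 - p)))).congr fun q _ => ?_
  simp only [smul_eq_mul, LinearMap.coe_smulRight, LinearMap.id_coe, id_eq, Pi.add_apply,
    klBin_eq_neg_Hbin_sub q hp0 hp1]
  ring

noncomputable def escort (r p : ℝ) : ℝ := p ^ r / (p ^ r + (1 - p) ^ r)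

section escort

variable {p : ℝ} (r : ℝ)

lemma escort_pos (hp0 : 0 < p) (hp1 : p < 1) : 0 < escort r p := by
  have := rpow_pos_of_pos (sub_pos.2 hp1) r
  unfold escort
  positivity

lemma escort_lt_one (hp0 : 0 < p) (hp1 : p < 1) : escort r p < 1 := by
  have := rpow_pos_of_pos (sub_pos.2 hp1) r
  have := rpow_pos_of_pos hp0 r
  rw [escort, div_lt_one (by positivity)]
  linarith

lemma one_sub_escort (hp0 : 0 < p) (hp1 : p < 1) :
    1 - escort r p = (1 - p) ^ r / (p ^ r + (1 - p) ^ r) := by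
  have := rpow_pos_of_pos (sub_pos.2 hp1) r
  have := rpow_pos_of_pos hp0 r
  rw [escort]
  field_simp
  ring

lemma klBin_escort (hp0 : 0 < p) (hp1 : p < 1) (q : ℝ) :
    klBin q (escort r p) = -Hbin q - r * (q * logb 2 p + (1 - q) * logb 2 (1 - p)) +
      logb 2 (p ^ r + (1 - p) ^ r) := by
  have hp1' := sub_pos.2 hp1
  have := rpow_pos_of_pos hp1' r
  have := rpow_pos_of_pos hp0 r
  rw [klBin_eq_neg_Hbin_sub q (escort_pos r hp0 hp1).ne' (escort_lt_one r hp0 hp1).ne,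
    one_sub_escort r hp0 hp1, escort, logb_div (by positivity) (by positivity),
    logb_div (by positivity) (by positivity), logb_rpow_eq_mul_logb_of_pos hp0,
    logb_rpow_eq_mul_logb_of_pos hp1']
  ring

end escort

lemma mul_Hbin_sub_klBin_eq {p ρ : ℝ} (hp0 : 0 < p) (hp1 : p < 1) (hρ : 1 + ρ ≠ 0) (q : ℝ) :
    ρ * Hbin q - klBin q p = (1 + ρ) * (logb 2 (p ^ (1 / (1 + ρ)) + (1 - p) ^ (1 / (1 + ρ))) -
      klBin q (escort (1 / (1 + ρ)) p)) := by
  rw [klBin_eq_neg_Hbin_sub q hp0.ne' hp1.ne, klBin_escort _ hp0 hp1]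
  field_simp
  ring

/-- `q ↦ ρH(q) - D(q‖p)` is concave on `[0,1]`, is maximized at
`s* = p^{1/(1+ρ)} / (p^{1/(1+ρ)} + (1-p)^{1/(1+ρ)})`, and its maximum value
equals `ρ H_{1/(1+ρ)}(p) = (1+ρ) log₂(p^{1/(1+ρ)} + (1-p)^{1/(1+ρ)})`. -/
theorem concave_max_guesswork_exponent
    (p ρ : ℝ) (hp0 : 0 < p) (hp : p ≤ 1 / 2) (hρ : 0 < ρ) :
    ConcaveOn ℝ (Set.Icc (0 : ℝ) 1) (fun q => ρ * Hbin q - klBin q p) ∧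
    IsMaxOn (fun q => ρ * Hbin q - klBin q p) (Set.Icc (0 : ℝ) 1)
      (p ^ (1 / (1 + ρ)) / (p ^ (1 / (1 + ρ)) + (1 - p) ^ (1 / (1 + ρ)))) ∧
    (fun q => ρ * Hbin q - klBin q p)
        (p ^ (1 / (1 + ρ)) / (p ^ (1 / (1 + ρ)) + (1 - p) ^ (1 / (1 + ρ)))) =
      (1 + ρ) * Real.logb 2 (p ^ (1 / (1 + ρ)) + (1 - p) ^ (1 / (1 + ρ))) := by
  have hp1 : p < 1 := by linarith
  have hs0 := escort_pos (1 / (1 + ρ)) hp0 hp1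
  have hs1 := escort_lt_one (1 / (1 + ρ)) hp0 hp1
  have tilt := mul_Hbin_sub_klBin_eq hp0 hp1 (by positivity : 1 + ρ ≠ 0)
  have value : ρ * Hbin (escort (1 / (1 + ρ)) p) - klBin (escort (1 / (1 + ρ)) p) p =
      (1 + ρ) * logb 2 (p ^ (1 / (1 + ρ)) + (1 - p) ^ (1 / (1 + ρ))) := by
    rw [tilt, klBin_self hs0.ne' hs1.ne, sub_zero]
  refine ⟨concaveOn_mul_Hbin_sub_klBin hp0.ne' hp1.ne (by positivity), fun q hq => ?_, value⟩
  change ρ * Hbin q - klBin q p ≤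
    ρ * Hbin (escort (1 / (1 + ρ)) p) - klBin (escort (1 / (1 + ρ)) p) p
  rw [value, tilt]
  have := klBin_nonneg hq hs0 hs1
  nlinarith
end

section
/- For $p \in (0,1)$ and $\rho > 0$, the identity $\rho H(s^*) - D(s^*\|p) = \rho H_{1/(1+\rho)}(p)$ holds, where $s^* = \frac{p^{1/(1+\rho)}}{p^{1/(1+\rho)} + (1-p)^{1/(1+\rho)}}$. -/
/-!
Since `ρ H(q) - D(q‖p) = Σᵢ qᵢ log (pᵢ / qᵢ ^ (1 + ρ))`, it equals `log K` whenever
`p = K q ^ (1 + ρ)` componentwise. The point `s*` is exactly such a tilt of `p`: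
`s*ᵢ ^ (1 + ρ) = pᵢ / Z ^ (1 + ρ)` with `Z = p ^ (1/(1+ρ)) + (1-p) ^ (1/(1+ρ))`,
so the left side is `(1 + ρ) log Z`.
-/

open Real

theorem rho_mul_Hbin_sub_klBin_of_eq_mul_rpow {p q ρ K : ℝ} (hq : q ∈ Set.Ioo (0 : ℝ) 1)
    (hK : 0 < K) (hp : p = K * q ^ (1 + ρ)) (hp' : 1 - p = K * (1 - q) ^ (1 + ρ)) :
    ρ * Hbin q - klBin q p = logb 2 K := by
  obtain ⟨hq0, hq1⟩ := hq
  have hq1' : 0 < 1 - q := sub_pos.mpr hq1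
  have hlogb_p : logb 2 p = logb 2 K + (1 + ρ) * logb 2 q := by
    rw [hp, logb_mul hK.ne' (rpow_pos_of_pos hq0 _).ne', logb_rpow_eq_mul_logb_of_pos hq0]
  have hlogb_p' : logb 2 (1 - p) = logb 2 K + (1 + ρ) * logb 2 (1 - q) := by
    rw [hp', logb_mul hK.ne' (rpow_pos_of_pos hq1' _).ne', logb_rpow_eq_mul_logb_of_pos hq1']
  have hp0 : p ≠ 0 := by rw [hp]; positivity
  have hp1 : 1 - p ≠ 0 := by rw [hp']; positivity
  simp only [Hbin, klBin, logb_div hq0.ne' hp0, logb_div hq1'.ne' hp1, hlogb_p, hlogb_p']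
  ring

theorem eq_rpow_mul_rpow_one_div_div_rpow {x Z c : ℝ} (hx : 0 ≤ x) (hZ : 0 < Z) (hc : c ≠ 0) :
    x = Z ^ c * (x ^ (1 / c) / Z) ^ c := by
  rw [div_rpow (rpow_nonneg hx _) hZ.le, one_div, rpow_inv_rpow hx hc,
    mul_div_cancel₀ _ (rpow_pos_of_pos hZ c).ne']

/-- `ρH(s*) - D(s*‖p) = ρ H_{1/(1+ρ)}(p)` at
`s* = p^{1/(1+ρ)} / (p^{1/(1+ρ)} + (1-p)^{1/(1+ρ)})`, where
`ρ H_{1/(1+ρ)}(p) = (1+ρ) log₂(p^{1/(1+ρ)} + (1-p)^{1/(1+ρ)})`. -/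
theorem renyi_identity_at_sstar (p ρ : ℝ) (hp : p ∈ Set.Ioo (0 : ℝ) 1) (hρ : 0 < ρ) :
    ρ * Hbin (p ^ (1 / (1 + ρ)) / (p ^ (1 / (1 + ρ)) + (1 - p) ^ (1 / (1 + ρ)))) -
        klBin (p ^ (1 / (1 + ρ)) / (p ^ (1 / (1 + ρ)) + (1 - p) ^ (1 / (1 + ρ)))) p =
      ρ * ((1 + ρ) / ρ * Real.logb 2 (p ^ (1 / (1 + ρ)) + (1 - p) ^ (1 / (1 + ρ)))) := by
  obtain ⟨hp0, hp1⟩ := hp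
  set a := p ^ (1 / (1 + ρ))
  set b := (1 - p) ^ (1 / (1 + ρ))
  have ha : 0 < a := rpow_pos_of_pos hp0 _
  have hb : 0 < b := rpow_pos_of_pos (sub_pos.mpr hp1) _
  have hZ : 0 < a + b := add_pos ha hb
  have hc : 1 + ρ ≠ 0 := by positivity
  have hs : a / (a + b) ∈ Set.Ioo (0 : ℝ) 1 :=
    ⟨div_pos ha hZ, (div_lt_one hZ).mpr (lt_add_of_pos_right a hb)⟩
  have hs' : 1 - a / (a + b) = b / (a + b) := by field_simp; ring
  rw [rho_mul_Hbin_sub_klBin_of_eq_mul_rpow hs (rpow_pos_of_pos hZ _)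
      (eq_rpow_mul_rpow_one_div_div_rpow hp0.le hZ hc)
      (hs' ▸ eq_rpow_mul_rpow_one_div_div_rpow (sub_pos.mpr hp1).le hZ hc),
    logb_rpow_eq_mul_logb_of_pos hZ]
  field_simp
end
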